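/- Let k ≥ 2 and ℓ ≥ 2. For each vertex v = v_0v_1⋯v_{kℓ−1} of ST_k^ℓ, let L(v) = { i ∈ {1,…,kℓ−1} : v_i = v_0 }. Then: (a) |L(v)| = ℓ−1 for every vertex v; (b) if v and w are adjacent in ST_k^ℓ, then L(v) ∩ L(w) = ∅; and consequently (c) every function λ on the vertex set with λ(v) ∈ L(v) for all v is a proper vertex coloring of ST_k^ℓ with colors in {1,…,kℓ−1}. -/
import Mathlib


/-- A string of length `k*l` over the alphabet `Fin k` in which every symbol
occurs exactly `l` times (an `l`-set permutation). -/
def IsMSP (k l : ℕ) (v : Fin (k * l) → Fin k) : Prop :=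
  ∀ a : Fin k, (Finset.univ.filter fun i => v i = a).card = l

/-- The vertex set of the star `l`-set transposition graph `ST_k^l`. -/
abbrev MSP (k l : ℕ) : Type := {v : Fin (k * l) → Fin k // IsMSP k l v}

/-- Star-transposition adjacency: `w` is obtained from `v` by transposing position `0`
with a position `i ≠ 0` whose entry differs from that of position `0`. -/
def STAdj (k l : ℕ) (v w : Fin (k * l) → Fin k) : Prop :=
  ∃ i j : Fin (k * l), (j : ℕ) = 0 ∧ i ≠ j ∧ v i ≠ v j ∧ w = v ∘ Equiv.swap j i

/-- The star `l`-set transposition graph `ST_k^l`. -/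
def STGraph (k l : ℕ) : SimpleGraph (MSP k l) :=
  SimpleGraph.fromRel fun v w => STAdj k l v.1 w.1

/-- for `l ≥ 2`, with `L(v) = {i ≠ 0 : v_i = v_0}` one has `|L(v)| = l - 1`,
adjacent vertices have disjoint lists, and any choice `λ(v) ∈ L(v)` is a proper vertex
coloring of `ST_k^l`. -/
theorem stmt8 (k l : ℕ) (hk : 2 ≤ k) (hl : 2 ≤ l)
    (L : MSP k l → Set (Fin (k * l)))
    (hL : ∀ v : MSP k l, L v = {i : Fin (k * l) | (i : ℕ) ≠ 0 ∧
      v.1 i = v.1 ⟨0, Nat.mul_pos (by omega) (by omega)⟩}) :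
    (∀ v : MSP k l, (L v).ncard = l - 1) ∧
    (∀ v w : MSP k l, (STGraph k l).Adj v w → L v ∩ L w = ∅) ∧
    (∀ lam : MSP k l → Fin (k * l), (∀ v, lam v ∈ L v) →
      ∀ v w : MSP k l, (STGraph k l).Adj v w → lam v ≠ lam w) := by
  have hz : 0 < k * l := Nat.mul_pos (by omega) (by omega)
  have key : ∀ v w : MSP k l, STAdj k l v.1 w.1 → L v ∩ L w = ∅ := by
    rintro v w ⟨i, j, hj0, hij, hvij, hw⟩
    apply Set.eq_empty_iff_forall_notMem.2
    rintro x ⟨hx1, hx2⟩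
    rw [hL] at hx1 hx2
    obtain ⟨hx0, hxv⟩ := hx1
    obtain ⟨-, hxw⟩ := hx2
    have hjz : j = (⟨0, hz⟩ : Fin (k * l)) := Fin.ext hj0
    have hxj : x ≠ j := by
      intro h; exact hx0 (by rw [h, hjz])
    rw [hw] at hxw
    simp only [Function.comp_apply] at hxw
    rw [← hjz] at hxv hxw
    rw [Equiv.swap_apply_left] at hxw
    by_cases hxi : x = i
    · rw [hxi, Equiv.swap_apply_right] at hxw
      exact hvij hxw.symm
    · rw [Equiv.swap_apply_of_ne_of_ne hxj hxi] at hxw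
      exact hvij (hxw ▸ hxv ▸ rfl)
  have disj : ∀ v w : MSP k l, (STGraph k l).Adj v w → L v ∩ L w = ∅ := by
    intro v w hadj
    rcases hadj with ⟨-, h | h⟩
    · exact key v w h
    · rw [Set.inter_comm]; exact key w v h
  refine ⟨?_, disj, ?_⟩
  · intro v
    rw [hL]
    have he : {i : Fin (k * l) | (i : ℕ) ≠ 0 ∧ v.1 i = v.1 ⟨0, hz⟩} =
        ((Finset.univ.filter fun i => v.1 i = v.1 ⟨0, hz⟩).erase ⟨0, hz⟩ : Finset (Fin (k * l))) := by
      ext x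
      simp only [Set.mem_setOf_eq, Finset.coe_erase, Set.mem_diff, Finset.mem_coe,
        Finset.mem_filter, Finset.mem_univ, true_and, Set.mem_singleton_iff]
      constructor
      · rintro ⟨h1, h2⟩; exact ⟨h2, fun h => h1 (by rw [h])⟩
      · rintro ⟨h2, h1⟩; exact ⟨fun h => h1 (Fin.ext h), h2⟩
    rw [he, Set.ncard_coe_finset, Finset.card_erase_of_mem (by simp), v.2 (v.1 ⟨0, hz⟩)]
  · intro lam hlam v w hadj heq
    have := disj v w hadj
    have h1 : lam v ∈ L v ∩ L w := ⟨hlam v, heq ▸ hlam w⟩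
    rw [this] at h1
    exact h1
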